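/- arXiv:1402.6812 — 3 statements merged into one kernel-verified Lean document; each statement's English description precedes it below -/
import Mathlib

section
/- Fix a, b ∈ ℝ and define φ : ℝ → ℝ⁴ by φ(t) = e^{(a+b)t}(cosh t · cos t, cosh t · sin t, −sinh t · sin t, sinh t · cos t). Then for all t₁, t₂ ∈ ℝ, φ(t₁)·φ(t₂) = φ(t₁ + t₂) under the generalized bicomplex product with α = β = 1, φ(0) = (1,0,0,0), and φ(−t) is the inverse of φ(t); moreover every φ(t) satisfies φ₁φ₃ + φ₂φ₄ = 0 (so φ is a one-parameter subgroup of the Lie group M_{t_i} for α = β = 1). -/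
open Real

/-- The generalized bicomplex product on ℝ⁴ with parameters α = β = 1. -/
def gbmul (x y : ℝ × ℝ × ℝ × ℝ) : ℝ × ℝ × ℝ × ℝ :=
  (x.1 * y.1 - x.2.1 * y.2.1 - x.2.2.1 * y.2.2.1 + x.2.2.2 * y.2.2.2,
   x.1 * y.2.1 + x.2.1 * y.1 - x.2.2.1 * y.2.2.2 - x.2.2.2 * y.2.2.1,
   x.1 * y.2.2.1 + x.2.2.1 * y.1 - x.2.1 * y.2.2.2 - x.2.2.2 * y.2.1,
   x.1 * y.2.2.2 + x.2.2.2 * y.1 + x.2.1 * y.2.2.1 + x.2.2.1 * y.2.1)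

/-- The tensor product `φ` of the hyperbolic spiral `e^{at}(cosh t, sinh t)`
and the spiral `e^{bt}(cos t, sin t)` is a one-parameter subgroup of the Lie
group `M_{t_i}` (for α = β = 1). -/
theorem tensor_spiral_one_param_subgroup_Mti (a b : ℝ) :
    let φ : ℝ → ℝ × ℝ × ℝ × ℝ := fun t =>
      (exp ((a + b) * t) * (cosh t * cos t),
       exp ((a + b) * t) * (cosh t * sin t),
       exp ((a + b) * t) * (-(sinh t * sin t)),
       exp ((a + b) * t) * (sinh t * cos t))
    (∀ t₁ t₂ : ℝ, gbmul (φ t₁) (φ t₂) = φ (t₁ + t₂)) ∧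
    φ 0 = (1, 0, 0, 0) ∧
    (∀ t : ℝ, gbmul (φ t) (φ (-t)) = (1, 0, 0, 0) ∧
              gbmul (φ (-t)) (φ t) = (1, 0, 0, 0)) ∧
    (∀ t : ℝ, (φ t).1 * (φ t).2.2.1 + (φ t).2.1 * (φ t).2.2.2 = 0) := by
  intro φ
  have key : ∀ t₁ t₂ : ℝ, gbmul (φ t₁) (φ t₂) = φ (t₁ + t₂) := by
    intro t₁ t₂
    simp only [φ, gbmul, Prod.mk.injEq, exp_add, cosh_add, sinh_add, cos_add, sin_add,
      mul_add, add_mul]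
    refine ⟨?_, ?_, ?_, ?_⟩ <;> ring
  refine ⟨key, ?_, ?_, ?_⟩
  · simp [φ]
  · intro t
    constructor
    · rw [key]; simp [φ]
    · rw [key]; simp [φ]
  · intro t
    simp only [φ]
    ring
end

section
/- Fix a, b ∈ ℝ and define f : ℝ² → ℝ⁴ by f(t,s) = e^{at+bs}(cosh t · cos s, cosh t · sin s, −sinh t · sin s, sinh t · cos s). Then for all (t₁,s₁), (t₂,s₂) ∈ ℝ², f(t₁,s₁)·f(t₂,s₂) = f(t₁+t₂, s₁+s₂) under the generalized bicomplex product with α = β = 1, f(0,0) = (1,0,0,0), and every point x = f(t,s) satisfies x₁x₃ + x₂x₄ = 0 (so the tensor product of the hyperbolic spiral γ(t) = e^{at}(cosh t, sinh t) and the spiral δ(s) = e^{bs}(cos s, sin s) is a 2-dimensional subgroup of M_{t_i}). -/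
open Real

/-- The tensor product surface of the hyperbolic spiral `e^{at}(cosh t, sinh t)`
and the spiral `e^{bs}(cos s, sin s)` is a 2-dimensional subgroup of the Lie
group `M_{t_i}` (for α = β = 1). -/
theorem tensor_spiral_two_dim_subgroup_Mti (a b : ℝ) :
    let f : ℝ → ℝ → ℝ × ℝ × ℝ × ℝ := fun t s =>
      (exp (a * t + b * s) * (cosh t * cos s),
       exp (a * t + b * s) * (cosh t * sin s),
       exp (a * t + b * s) * (-(sinh t * sin s)),
       exp (a * t + b * s) * (sinh t * cos s))
    (∀ t₁ s₁ t₂ s₂ : ℝ, gbmul (f t₁ s₁) (f t₂ s₂) = f (t₁ + t₂) (s₁ + s₂)) ∧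
    f 0 0 = (1, 0, 0, 0) ∧
    (∀ t s : ℝ, (f t s).1 * (f t s).2.2.1 + (f t s).2.1 * (f t s).2.2.2 = 0) := by
  intro f
  refine ⟨fun t₁ s₁ t₂ s₂ => ?_, ?_, fun t s => ?_⟩
  · have h : exp (a * (t₁ + t₂) + b * (s₁ + s₂)) =
        exp (a * t₁ + b * s₁) * exp (a * t₂ + b * s₂) := by
      rw [← Real.exp_add]; ring_nf
    simp only [f, gbmul, cosh_add, sinh_add, cos_add, sin_add, h]
    refine Prod.ext ?_ (Prod.ext ?_ (Prod.ext ?_ ?_)) <;> · dsimp only; ring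
  · simp [f]
  · simp only [f]; ring
end

section
/- Fix a, b ∈ ℝ and define f : ℝ² → ℝ⁴ by f(t,s) = e^{at+bs}(cos t · cos s, cos t · sin s, sin t · cos s, sin t · sin s). Then for all (t₁,s₁), (t₂,s₂) ∈ ℝ², f(t₁,s₁)·f(t₂,s₂) = f(t₁+t₂, s₁+s₂) under the generalized bicomplex product with α = β = 1, f(0,0) = (1,0,0,0), and every point x = f(t,s) satisfies x₁x₄ − x₂x₃ = 0 (so the tensor product of the two spirals γ(t) = e^{at}(cos t, sin t) and δ(s) = e^{bs}(cos s, sin s) is a 2-dimensional subgroup of M_{t_{ij}}). -/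
open Real

/-- The tensor product surface of the spirals `e^{at}(cos t, sin t)` and
`e^{bs}(cos s, sin s)` is a 2-dimensional subgroup of the Lie group
`M_{t_{ij}}` (for α = β = 1). -/
theorem tensor_spiral_two_dim_subgroup_Mtij (a b : ℝ) :
    let f : ℝ → ℝ → ℝ × ℝ × ℝ × ℝ := fun t s =>
      (exp (a * t + b * s) * (cos t * cos s),
       exp (a * t + b * s) * (cos t * sin s),
       exp (a * t + b * s) * (sin t * cos s),
       exp (a * t + b * s) * (sin t * sin s))
    (∀ t₁ s₁ t₂ s₂ : ℝ, gbmul (f t₁ s₁) (f t₂ s₂) = f (t₁ + t₂) (s₁ + s₂)) ∧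
    f 0 0 = (1, 0, 0, 0) ∧
    (∀ t s : ℝ, (f t s).1 * (f t s).2.2.2 - (f t s).2.1 * (f t s).2.2.1 = 0) := by
  intro f
  refine ⟨fun t₁ s₁ t₂ s₂ => ?_, by simp [f], fun t s => by simp [f]; ring⟩
  simp only [f, gbmul, Prod.mk.injEq]
  simp only [mul_add, exp_add, cos_add, sin_add]
  refine ⟨by ring, by ring, by ring, by ring⟩
end
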